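/- Let N ≥ 2 and K ≥ 1, and let (w, P) be a configuration with confidence e whose induced marginal on the N classes is uniform, i.e., ∑_{k ∈ Fin K} w k · P k i = 1/N for every i ∈ Fin N. Then log N − ∑_{k ∈ Fin K} w k · ∑_{i ∈ Fin N} (−P k i · log (P k i)) ≤ log (N·e), where log is the natural logarithm and 0·log 0 is interpreted as 0. (The Boyd–Chiang upper bound on channel capacity for uniform inputs, derived in the paper's Remark 4 and Appendix E as a consequence of Theorem 4: the mutual information I(X;Z) = H(X) − H(X|Z) is at most log of the sum over outputs of the largest column entry of the channel matrix.) -/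

import Mathlib

/-!
For each row `P k` with largest entry `m k`, the Shannon entropy dominates the min-entropy:
`-log (m k) ≤ H(P k)`. Averaging over `k` and applying Jensen's inequality to the concave `log`
gives `-∑ₖ w k H(P k) ≤ ∑ₖ w k log (m k) ≤ log (∑ₖ w k m k) = log e`; adding `log N` to both
sides is the bound.
-/

open Finset

/-- The maximum of a real-valued vector over the finite index set `Fin N` (`N > 0`). -/
noncomputable def colMax {N : ℕ} (hN : 0 < N) (v : Fin N → ℝ) : ℝ :=
  Finset.univ.sup' (Finset.univ_nonempty_iff.mpr ⟨⟨0, hN⟩⟩) v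

open Real

lemma pos_of_sum_eq_one_of_forall_le {ι : Type*} [Fintype ι] {p : ι → ℝ} {m : ℝ}
    (hp : ∑ i, p i = 1) (hpm : ∀ i, p i ≤ m) : 0 < m := by
  by_contra! hm
  have : ∑ i, p i ≤ 0 := sum_nonpos fun i _ => (hpm i).trans hm
  linarith

lemma neg_log_le_sum_negMulLog {ι : Type*} [Fintype ι] {p : ι → ℝ} {m : ℝ}
    (hp : ∀ i, 0 ≤ p i) (hps : ∑ i, p i = 1) (hpm : ∀ i, p i ≤ m) :
    -log m ≤ ∑ i, negMulLog (p i) := by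
  have hterm : ∀ i, -(p i * log m) ≤ negMulLog (p i) := by
    intro i
    rcases (hp i).eq_or_lt with hpi | hpi
    · simp [← hpi]
    · have := mul_le_mul_of_nonneg_left (log_le_log hpi (hpm i)) hpi.le
      rw [negMulLog]
      linarith
  calc -log m = ∑ i, -(p i * log m) := by rw [sum_neg_distrib, ← sum_mul, hps, one_mul]
    _ ≤ ∑ i, negMulLog (p i) := sum_le_sum fun i _ => hterm i

lemma sum_mul_log_le_log_sum_mul {ι : Type*} [Fintype ι] {w m : ι → ℝ}
    (hw : ∀ k, 0 ≤ w k) (hws : ∑ k, w k = 1) (hm : ∀ k, 0 < m k) :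
    ∑ k, w k * log (m k) ≤ log (∑ k, w k * m k) :=
  strictConcaveOn_log_Ioi.concaveOn.le_map_sum (fun k _ => hw k) hws fun k _ => hm k

lemma sum_mul_pos_of_sum_eq_one {ι : Type*} [Fintype ι] {w m : ι → ℝ}
    (hw : ∀ k, 0 ≤ w k) (hws : ∑ k, w k = 1) (hm : ∀ k, 0 < m k) :
    0 < ∑ k, w k * m k :=
  (convex_Ioi (0 : ℝ)).sum_mem (t := univ) (z := m) (fun k _ => hw k) hws fun k _ => hm k

/-- The Boyd–Chiang upper bound on channel capacity for uniform inputs (paper's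
Remark 4 and Appendix E): if the induced marginal on the `N` classes is uniform,
then `log N - H(X|Z) ≤ log (N * e)` where `e` is the confidence. -/
theorem boyd_chiang_bound (N K : ℕ) (hN : 2 ≤ N)
    (w : Fin K → ℝ) (hw : ∀ k, 0 ≤ w k) (hws : ∑ k, w k = 1)
    (P : Fin K → Fin N → ℝ) (hP : ∀ k i, 0 ≤ P k i) (hPs : ∀ k, ∑ i, P k i = 1)
    (e : ℝ) (he : e = ∑ k, w k * colMax (by omega) (P k)) :
    Real.log N - ∑ k, w k * ∑ i, Real.negMulLog (P k i) ≤ Real.log ((N : ℝ) * e) := by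
  set m : Fin K → ℝ := fun k => colMax (by omega) (P k)
  have hPm : ∀ k i, P k i ≤ m k := fun k i => le_sup' (P k) (mem_univ i)
  have hm : ∀ k, 0 < m k := fun k => pos_of_sum_eq_one_of_forall_le (hPs k) (hPm k)
  have he_pos : 0 < e := he ▸ sum_mul_pos_of_sum_eq_one hw hws hm
  have hN_pos : (0 : ℝ) < N := by positivity
  calc log N - ∑ k, w k * ∑ i, negMulLog (P k i)
      ≤ log N + ∑ k, w k * log (m k) := by
        have := sum_le_sum fun k (_ : k ∈ univ) => mul_le_mul_of_nonneg_left
          (neg_log_le_sum_negMulLog (hP k) (hPs k) (hPm k)) (hw k)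
        simp only [mul_neg, sum_neg_distrib] at this
        linarith
    _ ≤ log N + log e := by
        rw [he]
        gcongr
        exact sum_mul_log_le_log_sum_mul hw hws hm
    _ = log (N * e) := (log_mul hN_pos.ne' he_pos.ne').symm
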